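/- Let F be an overlapping IFS with mask point q and critical itineraries α, β. If π_a(α) ≠ π_a(β) for all a ∈ (0,1), then π_a restricted to Ω̄_q = Ω_q^+ ∪ Ω_q^- is strictly increasing (with respect to lexicographic order) for every a ∈ (0,1). -/
import Mathlib


open Set Filter Topology

/-- Strict lexicographic order on binary strings. -/
def lexLt (σ ω : ℕ → Bool) : Prop :=
  ∃ k, (∀ j < k, σ j = ω j) ∧ σ k < ω k

/-- Lexicographic order on binary strings. -/
def lexLe (σ ω : ℕ → Bool) : Prop := lexLt σ ω ∨ σ = ω

/-- n-fold shift. -/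
def shiftn (n : ℕ) (ω : ℕ → Bool) : ℕ → Bool := fun k => ω (k + n)

/-- Plus dynamical system: boundary point goes to the 0-branch inverse `g1` side, i.e. `x ≥ q` uses `g1`. -/
noncomputable def Tplus (g0 g1 : ℝ → ℝ) (q : ℝ) (x : ℝ) : ℝ := if x < q then g0 x else g1 x

noncomputable def Tminus (g0 g1 : ℝ → ℝ) (q : ℝ) (x : ℝ) : ℝ := if x ≤ q then g0 x else g1 x

/-- Itinerary under the plus system. -/
noncomputable def tauPlus (g0 g1 : ℝ → ℝ) (q : ℝ) (x : ℝ) : ℕ → Bool :=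
  fun n => decide (q ≤ (Tplus g0 g1 q)^[n] x)

/-- Itinerary under the minus system. -/
noncomputable def tauMinus (g0 g1 : ℝ → ℝ) (q : ℝ) (x : ℝ) : ℕ → Bool :=
  fun n => decide (q < (Tminus g0 g1 q)^[n] x)

/-- Coding map of the uniform IFS with ratio `a`. -/
noncomputable def piU (a : ℝ) (ω : ℕ → Bool) : ℝ := (1 - a) * ∑' k : ℕ, (cond (ω k) (a ^ k) 0)

/-- `wordMap u0 u1 σ k = f_{σ|k} = f_{σ 0} ∘ ⋯ ∘ f_{σ k}`. -/
def wordMap (u0 u1 : ℝ → ℝ) (σ : ℕ → Bool) : ℕ → ℝ → ℝ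
  | 0 => cond (σ 0) u1 u0
  | (k+1) => fun x => wordMap u0 u1 σ k ((cond (σ (k+1)) u1 u0) x)

/-- Coding map of the IFS `(u0, u1)`. -/
noncomputable def piCode (u0 u1 : ℝ → ℝ) (σ : ℕ → Bool) : ℝ :=
  limUnder atTop (fun k => wordMap u0 u1 σ k 0)

/-- `h` is a homeomorphism of `[0,1]` onto itself. -/
def IsIccHomeo (h : ℝ → ℝ) : Prop :=
  ∃ h' : ℝ → ℝ, ContinuousOn h (Icc 0 1) ∧ ContinuousOn h' (Icc 0 1) ∧
    MapsTo h (Icc 0 1) (Icc 0 1) ∧ MapsTo h' (Icc 0 1) (Icc 0 1) ∧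
    (∀ x ∈ Icc (0:ℝ) 1, h' (h x) = x) ∧ (∀ y ∈ Icc (0:ℝ) 1, h (h' y) = y)

/-- generic master monotonicity lemma for two symbolic systems -/
lemma genMaster (T1 T2 : ℝ → ℝ) (s1 s2 : ℝ → Bool) (R : ℝ → ℝ → Prop)
    (hT1 : ∀ x ∈ Icc (0:ℝ) 1, T1 x ∈ Icc (0:ℝ) 1)
    (hT2 : ∀ x ∈ Icc (0:ℝ) 1, T2 x ∈ Icc (0:ℝ) 1)
    (hsym : ∀ x y, x ∈ Icc (0:ℝ) 1 → y ∈ Icc (0:ℝ) 1 → R x y → s1 x = true → s2 y = true)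
    (hstep : ∀ x y, x ∈ Icc (0:ℝ) 1 → y ∈ Icc (0:ℝ) 1 → R x y → s1 x = s2 y → R (T1 x) (T2 y))
    (u v : ℝ) (hu : u ∈ Icc (0:ℝ) 1) (hv : v ∈ Icc (0:ℝ) 1) (hR : R u v) :
    lexLe (fun n => s1 (T1^[n] u)) (fun n => s2 (T2^[n] v)) := by
  classical
  have inv : ∀ j, (∀ i, i < j → s1 (T1^[i] u) = s2 (T2^[i] v)) →
      T1^[j] u ∈ Icc (0:ℝ) 1 ∧ T2^[j] v ∈ Icc (0:ℝ) 1 ∧ R (T1^[j] u) (T2^[j] v) := by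
    intro j
    induction j with
    | zero => intro _; exact ⟨hu, hv, hR⟩
    | succ j ih =>
      intro hagree
      obtain ⟨m1, m2, hr⟩ := ih (fun i hi => hagree i (hi.trans (Nat.lt_succ_self j)))
      rw [Function.iterate_succ_apply', Function.iterate_succ_apply']
      exact ⟨hT1 _ m1, hT2 _ m2, hstep _ _ m1 m2 hr (hagree j (Nat.lt_succ_self j))⟩
  by_cases hall : ∀ n, s1 (T1^[n] u) = s2 (T2^[n] v)
  · exact Or.inr (funext hall)
  · push_neg at hall
    have hex : ∃ n, s1 (T1^[n] u) ≠ s2 (T2^[n] v) := hall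
    set k := Nat.find hex with hk
    have hkspec : s1 (T1^[k] u) ≠ s2 (T2^[k] v) := Nat.find_spec hex
    have hkmin : ∀ i, i < k → s1 (T1^[i] u) = s2 (T2^[i] v) := by
      intro i hi
      by_contra hcon
      exact (Nat.find_min hex hi) hcon
    obtain ⟨m1, m2, hr⟩ := inv k hkmin
    left
    refine ⟨k, fun j hj => hkmin j hj, ?_⟩
    cases h1 : s1 (T1^[k] u) with
    | true =>
      exact absurd (h1.trans (hsym _ _ m1 m2 hr h1).symm) hkspec
    | false =>
      cases h2 : s2 (T2^[k] v) with
      | false => exact absurd (h1.trans h2.symm) hkspec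
      | true => show s1 (T1^[k] u) < s2 (T2^[k] v); rw [h1, h2]; exact Bool.false_lt_true

structure IFSPack (f0 f1 g0 g1 : ℝ → ℝ) (q : ℝ) : Prop where
  hf0m : StrictMonoOn f0 (Icc 0 1)
  hf1m : StrictMonoOn f1 (Icc 0 1)
  hf0c : ContinuousOn f0 (Icc 0 1)
  hf1c : ContinuousOn f1 (Icc 0 1)
  hf00 : f0 0 = 0
  hf11 : f1 1 = 1
  hf10pos : 0 < f1 0
  hq1 : f1 0 < q
  hq2 : q < f0 1
  hf01lt : f0 1 < 1
  hg0 : ∀ x ∈ Icc (0:ℝ) 1, g0 (f0 x) = x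
  hg1 : ∀ x ∈ Icc (0:ℝ) 1, g1 (f1 x) = x

namespace IFSPack

variable {f0 f1 g0 g1 : ℝ → ℝ} {q : ℝ} (P : IFSPack f0 f1 g0 g1 q)

include P

lemma q_pos : 0 < q := P.hf10pos.trans P.hq1

lemma q_lt_one : q < 1 := P.hq2.trans P.hf01lt

lemma q_mem : q ∈ Icc (0:ℝ) 1 := ⟨P.q_pos.le, P.q_lt_one.le⟩

lemma g0_spec : ∀ u, 0 ≤ u → u ≤ f0 1 → g0 u ∈ Icc (0:ℝ) 1 ∧ f0 (g0 u) = u := by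
  intro u h0 h1
  have hsub : Icc (f0 0) (f0 1) ⊆ f0 '' Icc 0 1 :=
    intermediate_value_Icc (by norm_num : (0:ℝ) ≤ 1) P.hf0c
  obtain ⟨s, hs, hfs⟩ := hsub ⟨by rw [P.hf00]; exact h0, h1⟩
  have : g0 u = s := by rw [← hfs, P.hg0 s hs]
  rw [this, ← hfs] at *
  exact ⟨hs, rfl⟩

lemma g1_spec : ∀ u, f1 0 ≤ u → u ≤ 1 → g1 u ∈ Icc (0:ℝ) 1 ∧ f1 (g1 u) = u := by
  intro u h0 h1
  have hsub : Icc (f1 0) (f1 1) ⊆ f1 '' Icc 0 1 :=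
    intermediate_value_Icc (by norm_num : (0:ℝ) ≤ 1) P.hf1c
  obtain ⟨s, hs, hfs⟩ := hsub ⟨h0, by rw [P.hf11]; exact h1⟩
  have : g1 u = s := by rw [← hfs, P.hg1 s hs]
  rw [this, ← hfs] at *
  exact ⟨hs, rfl⟩

lemma g0_le {u v : ℝ} (h0 : 0 ≤ u) (huv : u ≤ v) (h1 : v ≤ f0 1) : g0 u ≤ g0 v := by
  obtain ⟨hsu, hfu⟩ := P.g0_spec u h0 (huv.trans h1)
  obtain ⟨hsv, hfv⟩ := P.g0_spec v (h0.trans huv) h1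
  exact (P.hf0m.le_iff_le hsu hsv).mp (by rw [hfu, hfv]; exact huv)

lemma g0_lt {u v : ℝ} (h0 : 0 ≤ u) (huv : u < v) (h1 : v ≤ f0 1) : g0 u < g0 v := by
  obtain ⟨hsu, hfu⟩ := P.g0_spec u h0 (huv.le.trans h1)
  obtain ⟨hsv, hfv⟩ := P.g0_spec v (h0.trans huv.le) h1
  exact (P.hf0m.lt_iff_lt hsu hsv).mp (by rw [hfu, hfv]; exact huv)

lemma g1_le {u v : ℝ} (h0 : f1 0 ≤ u) (huv : u ≤ v) (h1 : v ≤ 1) : g1 u ≤ g1 v := by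
  obtain ⟨hsu, hfu⟩ := P.g1_spec u h0 (huv.trans h1)
  obtain ⟨hsv, hfv⟩ := P.g1_spec v (h0.trans huv) h1
  exact (P.hf1m.le_iff_le hsu hsv).mp (by rw [hfu, hfv]; exact huv)

lemma g1_lt {u v : ℝ} (h0 : f1 0 ≤ u) (huv : u < v) (h1 : v ≤ 1) : g1 u < g1 v := by
  obtain ⟨hsu, hfu⟩ := P.g1_spec u h0 (huv.le.trans h1)
  obtain ⟨hsv, hfv⟩ := P.g1_spec v (h0.trans huv.le) h1
  exact (P.hf1m.lt_iff_lt hsu hsv).mp (by rw [hfu, hfv]; exact huv)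

lemma Tplus_mem : ∀ x ∈ Icc (0:ℝ) 1, Tplus g0 g1 q x ∈ Icc (0:ℝ) 1 := by
  intro x hx
  unfold Tplus
  split_ifs with h
  · exact (P.g0_spec x hx.1 ((h.trans P.hq2).le)).1
  · exact (P.g1_spec x ((P.hq1.trans_le (not_lt.mp h)).le) hx.2).1

lemma Tminus_mem : ∀ x ∈ Icc (0:ℝ) 1, Tminus g0 g1 q x ∈ Icc (0:ℝ) 1 := by
  intro x hx
  unfold Tminus
  split_ifs with h
  · exact (P.g0_spec x hx.1 (h.trans P.hq2.le)).1
  · exact (P.g1_spec x (P.hq1.le.trans (not_le.mp h).le) hx.2).1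

lemma iterPlus_mem (k : ℕ) {x : ℝ} (hx : x ∈ Icc (0:ℝ) 1) :
    (Tplus g0 g1 q)^[k] x ∈ Icc (0:ℝ) 1 := by
  induction k with
  | zero => exact hx
  | succ k ih => rw [Function.iterate_succ_apply']; exact P.Tplus_mem _ ih

lemma iterMinus_mem (k : ℕ) {x : ℝ} (hx : x ∈ Icc (0:ℝ) 1) :
    (Tminus g0 g1 q)^[k] x ∈ Icc (0:ℝ) 1 := by
  induction k with
  | zero => exact hx
  | succ k ih => rw [Function.iterate_succ_apply']; exact P.Tminus_mem _ ih

lemma lexle_pp {u v : ℝ} (hu : u ∈ Icc (0:ℝ) 1) (hv : v ∈ Icc (0:ℝ) 1) (huv : u ≤ v) :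
    lexLe (tauPlus g0 g1 q u) (tauPlus g0 g1 q v) := by
  refine genMaster (Tplus g0 g1 q) (Tplus g0 g1 q)
    (fun x => decide (q ≤ x)) (fun x => decide (q ≤ x)) (· ≤ ·)
    P.Tplus_mem P.Tplus_mem ?_ ?_ u v hu hv huv
  · intro x y _ _ hxy hx
    simp only [decide_eq_true_eq] at *
    exact hx.trans hxy
  · intro x y hx hy hxy hs
    have hiff := decide_eq_decide.mp hs
    unfold Tplus
    by_cases hq : q ≤ x
    · have hqy : q ≤ y := hiff.mp hq
      rw [if_neg (not_lt.mpr hq), if_neg (not_lt.mpr hqy)]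
      exact P.g1_le (P.hq1.le.trans hq) hxy hy.2
    · have hqy : ¬ q ≤ y := fun h => hq (hiff.mpr h)
      rw [if_pos (not_le.mp hq), if_pos (not_le.mp hqy)]
      exact P.g0_le hx.1 hxy (((not_le.mp hqy).trans P.hq2).le)

lemma lexle_mm {u v : ℝ} (hu : u ∈ Icc (0:ℝ) 1) (hv : v ∈ Icc (0:ℝ) 1) (huv : u ≤ v) :
    lexLe (tauMinus g0 g1 q u) (tauMinus g0 g1 q v) := by
  refine genMaster (Tminus g0 g1 q) (Tminus g0 g1 q)
    (fun x => decide (q < x)) (fun x => decide (q < x)) (· ≤ ·)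
    P.Tminus_mem P.Tminus_mem ?_ ?_ u v hu hv huv
  · intro x y _ _ hxy hx
    simp only [decide_eq_true_eq] at *
    exact hx.trans_le hxy
  · intro x y hx hy hxy hs
    have hiff := decide_eq_decide.mp hs
    unfold Tminus
    by_cases hq : q < x
    · have hqy : q < y := hiff.mp hq
      rw [if_neg (not_le.mpr hq), if_neg (not_le.mpr hqy)]
      exact P.g1_le (P.hq1.le.trans hq.le) hxy hy.2
    · have hqy : ¬ q < y := fun h => hq (hiff.mpr h)
      rw [if_pos (not_lt.mp hq), if_pos (not_lt.mp hqy)]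
      exact P.g0_le hx.1 hxy ((not_lt.mp hqy).trans P.hq2.le)

lemma lexle_pm {u v : ℝ} (hu : u ∈ Icc (0:ℝ) 1) (hv : v ∈ Icc (0:ℝ) 1) (huv : u < v) :
    lexLe (tauPlus g0 g1 q u) (tauMinus g0 g1 q v) := by
  refine genMaster (Tplus g0 g1 q) (Tminus g0 g1 q)
    (fun x => decide (q ≤ x)) (fun x => decide (q < x)) (· < ·)
    P.Tplus_mem P.Tminus_mem ?_ ?_ u v hu hv huv
  · intro x y _ _ hxy hx
    simp only [decide_eq_true_eq] at *
    exact hx.trans_lt hxy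
  · intro x y hx hy hxy hs
    have hiff := decide_eq_decide.mp hs
    unfold Tplus Tminus
    by_cases hq : q ≤ x
    · have hqy : q < y := hiff.mp hq
      rw [if_neg (not_lt.mpr hq), if_neg (not_le.mpr hqy)]
      exact P.g1_lt (P.hq1.le.trans hq) hxy hy.2
    · have hqy : ¬ q < y := fun h => hq (hiff.mpr h)
      rw [if_pos (not_le.mp hq), if_pos (not_lt.mp hqy)]
      exact P.g0_lt hx.1 hxy ((not_lt.mp hqy).trans P.hq2.le)

omit P in
lemma shift_tauPlus (k : ℕ) (x : ℝ) :
    shiftn k (tauPlus g0 g1 q x) = tauPlus g0 g1 q ((Tplus g0 g1 q)^[k] x) := by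
  funext j
  show decide (q ≤ (Tplus g0 g1 q)^[j + k] x) = _
  rw [Function.iterate_add_apply]
  rfl

omit P in
lemma shift_tauMinus (k : ℕ) (x : ℝ) :
    shiftn k (tauMinus g0 g1 q x) = tauMinus g0 g1 q ((Tminus g0 g1 q)^[k] x) := by
  funext j
  show decide (q < (Tminus g0 g1 q)^[j + k] x) = _
  rw [Function.iterate_add_apply]
  rfl

end IFSPack

section PiLemmas

variable {a b r : ℝ} {σ ω : ℕ → Bool}

lemma summable_cond (ha : 0 ≤ a) (ha1 : a < 1) (σ : ℕ → Bool) :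
    Summable (fun k => cond (σ k) (a ^ k) 0) := by
  refine Summable.of_nonneg_of_le (fun k => ?_) (fun k => ?_)
    (summable_geometric_of_lt_one ha ha1)
  · cases σ k <;> simp [pow_nonneg ha]
  · cases σ k <;> simp [pow_nonneg ha]

lemma tsum_cond_nonneg (ha : 0 ≤ a) (σ : ℕ → Bool) :
    0 ≤ ∑' k : ℕ, cond (σ k) (a ^ k) 0 := by
  refine tsum_nonneg (fun k => ?_)
  cases σ k <;> simp [pow_nonneg ha]

lemma tsum_cond_le (ha : 0 ≤ a) (ha1 : a < 1) (σ : ℕ → Bool) :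
    ∑' k : ℕ, cond (σ k) (a ^ k) 0 ≤ (1 - a)⁻¹ := by
  have h := Summable.tsum_le_tsum (f := fun k => cond (σ k) (a ^ k) 0) (g := fun k => a ^ k)
    (fun k => by cases h : σ k <;> simp [h, pow_nonneg ha])
    (summable_cond ha ha1 σ) (summable_geometric_of_lt_one ha ha1)
  rwa [tsum_geometric_of_lt_one ha ha1] at h

lemma piU_nonneg (ha : 0 ≤ a) (ha1 : a < 1) (σ : ℕ → Bool) : 0 ≤ piU a σ :=
  mul_nonneg (by linarith) (tsum_cond_nonneg ha σ)

/-- decomposition of the difference of coding values along a common prefix -/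
lemma piU_agree (ha : 0 ≤ a) (ha1 : a < 1) (k : ℕ) (hagree : ∀ j < k, σ j = ω j) :
    piU a ω - piU a σ = a ^ k * (piU a (shiftn k ω) - piU a (shiftn k σ)) := by
  have hs : ∀ ξ : ℕ → Bool, ∑' j : ℕ, cond (ξ j) (a ^ j) 0 =
      (∑ j ∈ Finset.range k, cond (ξ j) (a ^ j) 0) +
        a ^ k * ∑' j : ℕ, cond (shiftn k ξ j) (a ^ j) 0 := by
    intro ξ
    rw [← Summable.sum_add_tsum_nat_add k (summable_cond ha ha1 ξ)]
    congr 1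
    rw [← tsum_mul_left]
    congr 1
    funext j
    show cond (ξ (j + k)) (a ^ (j + k)) 0 = a ^ k * cond (ξ (j + k)) (a ^ j) 0
    cases ξ (j + k) <;> simp [pow_add] <;> ring
  have hfin : (∑ j ∈ Finset.range k, cond (σ j) (a ^ j) 0)
      = ∑ j ∈ Finset.range k, cond (ω j) (a ^ j) 0 :=
    Finset.sum_congr rfl (fun j hj => by rw [hagree j (Finset.mem_range.mp hj)])
  unfold piU
  rw [hs ω, hs σ, hfin]
  ring

/-- Lipschitz estimate for `piU` in the parameter. -/
lemma piU_diff_le (ha0 : 0 < a) (hab : a ≤ b) (hbr : b ≤ r) (hr1 : r < 1) (σ : ℕ → Bool) :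
    |piU b σ - piU a σ| ≤ (b - a) / (1 - r) := by
  have ha1 : a < 1 := lt_of_le_of_lt (hab.trans hbr) hr1
  have hb1 : b < 1 := lt_of_le_of_lt hbr hr1
  have hb0 : 0 < b := ha0.trans_le hab
  set fa := ∑' k : ℕ, cond (σ k) (a ^ k) 0 with hfa
  set fb := ∑' k : ℕ, cond (σ k) (b ^ k) 0 with hfb
  have hfa0 : 0 ≤ fa := tsum_cond_nonneg ha0.le σ
  have hfale : fa ≤ (1 - a)⁻¹ := tsum_cond_le ha0.le ha1 σ
  have hfafb : fa ≤ fb := by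
    refine Summable.tsum_le_tsum (fun k => ?_) (summable_cond ha0.le ha1 σ) (summable_cond hb0.le hb1 σ)
    cases h : σ k <;> simp [h] <;>
      first
        | exact pow_le_pow_left₀ ha0.le hab k
        | exact pow_nonneg hb0.le k
  have hsub : fb - fa ≤ (1 - b)⁻¹ - (1 - a)⁻¹ := by
    have h1 : fb - fa = ∑' k : ℕ, (cond (σ k) (b ^ k) 0 - cond (σ k) (a ^ k) 0) :=
      (Summable.tsum_sub (summable_cond hb0.le hb1 σ) (summable_cond ha0.le ha1 σ)).symm
    have h2 : ∑' k : ℕ, (b ^ k - a ^ k) = (1 - b)⁻¹ - (1 - a)⁻¹ := by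
      rw [Summable.tsum_sub (summable_geometric_of_lt_one hb0.le hb1) (summable_geometric_of_lt_one ha0.le ha1),
        tsum_geometric_of_lt_one hb0.le hb1, tsum_geometric_of_lt_one ha0.le ha1]
    rw [h1, ← h2]
    refine Summable.tsum_le_tsum (fun k => ?_)
      ((summable_cond hb0.le hb1 σ).sub (summable_cond ha0.le ha1 σ))
      ((summable_geometric_of_lt_one hb0.le hb1).sub (summable_geometric_of_lt_one ha0.le ha1))
    cases h : σ k <;> simp [h] <;>
      first
        | exact sub_nonneg.mpr (pow_le_pow_left₀ ha0.le hab k)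
        | exact pow_le_pow_left₀ ha0.le hab k
  -- cleaned-up forms
  have h1a : 0 < 1 - a := by linarith
  have h1b : 0 < 1 - b := by linarith
  have h1r : 0 < 1 - r := by linarith
  have hra : 1 - r ≤ 1 - a := by linarith
  have hrb : 1 - r ≤ 1 - b := by linarith
  have hfa1 : (1 - a) * fa ≤ 1 := by
    calc (1 - a) * fa ≤ (1 - a) * (1 - a)⁻¹ := by
          exact mul_le_mul_of_nonneg_left hfale h1a.le
      _ = 1 := mul_inv_cancel₀ (ne_of_gt h1a)
  have hsub2 : (1 - a) * ((1 - b) * (fb - fa)) ≤ b - a := by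
    have : (1 - b) * (fb - fa) ≤ (1 - b) * ((1 - b)⁻¹ - (1 - a)⁻¹) :=
      mul_le_mul_of_nonneg_left hsub h1b.le
    calc (1 - a) * ((1 - b) * (fb - fa)) ≤ (1 - a) * ((1 - b) * ((1 - b)⁻¹ - (1 - a)⁻¹)) := by
          refine mul_le_mul_of_nonneg_left this h1a.le
      _ = b - a := by field_simp; ring
  have hba : 0 ≤ b - a := sub_nonneg.mpr hab
  have hfbfa : 0 ≤ fb - fa := sub_nonneg.mpr hfafb
  have hpb : piU b σ = (1 - b) * fb := rfl
  have hpa : piU a σ = (1 - a) * fa := rfl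
  rw [abs_le, hpb, hpa]
  constructor
  · rw [neg_le, neg_sub, le_div_iff₀ h1r]
    nlinarith [mul_le_mul_of_nonneg_left hfa1 hba,
      mul_nonneg (mul_nonneg hba hfa0) (by linarith : (0:ℝ) ≤ (1 - a) - (1 - r)),
      mul_nonneg (mul_nonneg h1b.le hfbfa) h1r.le]
  · rw [le_div_iff₀ h1r]
    nlinarith [hsub2, mul_nonneg (mul_nonneg hba hfa0) h1r.le,
      mul_nonneg (mul_nonneg h1b.le hfbfa) (by linarith : (0:ℝ) ≤ (1 - a) - (1 - r))]

lemma piU_lip (ha0 : 0 < a) (hb0 : 0 < b) (har : a ≤ r) (hbr : b ≤ r) (hr1 : r < 1)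
    (σ : ℕ → Bool) : |piU b σ - piU a σ| ≤ |b - a| / (1 - r) := by
  rcases le_total a b with h | h
  · rw [abs_of_nonneg (sub_nonneg.mpr h)]
    exact piU_diff_le ha0 h hbr hr1 σ
  · rw [abs_sub_comm (piU b σ), abs_sub_comm b a, abs_of_nonneg (sub_nonneg.mpr h)]
    exact piU_diff_le hb0 h har hr1 σ

end PiLemmas

def Omem (g0 g1 : ℝ → ℝ) (q : ℝ) (σ : ℕ → Bool) : Prop :=
  σ ∈ tauPlus g0 g1 q '' (Icc 0 1) ∪ tauMinus g0 g1 q '' (Icc 0 1)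

def Sprop (g0 g1 : ℝ → ℝ) (q a : ℝ) : Prop :=
  ∀ σ, Omem g0 g1 q σ → ∀ ω, Omem g0 g1 q ω → lexLe σ ω → piU a σ ≤ piU a ω

namespace IFSPack

variable {f0 f1 g0 g1 : ℝ → ℝ} {q : ℝ} (P : IFSPack f0 f1 g0 g1 q)

include P

lemma alpha_mem : Omem g0 g1 q (tauMinus g0 g1 q q) := Or.inr ⟨q, P.q_mem, rfl⟩

lemma beta_mem : Omem g0 g1 q (tauPlus g0 g1 q q) := Or.inl ⟨q, P.q_mem, rfl⟩

omit P in
lemma lexLt_alpha_beta : lexLt (tauMinus g0 g1 q q) (tauPlus g0 g1 q q) := by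
  refine ⟨0, fun j hj => absurd hj (Nat.not_lt_zero j), ?_⟩
  show decide (q < (Tminus g0 g1 q)^[0] q) < decide (q ≤ (Tplus g0 g1 q)^[0] q)
  have h1 : (Tminus g0 g1 q)^[0] q = q := rfl
  have h2 : (Tplus g0 g1 q)^[0] q = q := rfl
  rw [h1, h2, decide_eq_false (lt_irrefl q), decide_eq_true (le_refl q)]
  exact Bool.false_lt_true

lemma shift_le_alpha {σ : ℕ → Bool} (h : Omem g0 g1 q σ) (k : ℕ) (hk : σ k = false) :
    Omem g0 g1 q (shiftn k σ) ∧ lexLe (shiftn k σ) (tauMinus g0 g1 q q) := by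
  rcases h with ⟨x, hx, rfl⟩ | ⟨x, hx, rfl⟩
  · have hmem := P.iterPlus_mem k hx
    rw [shift_tauPlus]
    have hlt : (Tplus g0 g1 q)^[k] x < q := by
      have : decide (q ≤ (Tplus g0 g1 q)^[k] x) = false := hk
      exact not_le.mp (of_decide_eq_false this)
    exact ⟨Or.inl ⟨_, hmem, rfl⟩, P.lexle_pm hmem P.q_mem hlt⟩
  · have hmem := P.iterMinus_mem k hx
    rw [shift_tauMinus]
    have hle : (Tminus g0 g1 q)^[k] x ≤ q := by
      have : decide (q < (Tminus g0 g1 q)^[k] x) = false := hk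
      exact not_lt.mp (of_decide_eq_false this)
    exact ⟨Or.inr ⟨_, hmem, rfl⟩, P.lexle_mm hmem P.q_mem hle⟩

lemma beta_le_shift {ω : ℕ → Bool} (h : Omem g0 g1 q ω) (k : ℕ) (hk : ω k = true) :
    Omem g0 g1 q (shiftn k ω) ∧ lexLe (tauPlus g0 g1 q q) (shiftn k ω) := by
  rcases h with ⟨x, hx, rfl⟩ | ⟨x, hx, rfl⟩
  · have hmem := P.iterPlus_mem k hx
    rw [shift_tauPlus]
    have hle : q ≤ (Tplus g0 g1 q)^[k] x := by
      have : decide (q ≤ (Tplus g0 g1 q)^[k] x) = true := hk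
      exact of_decide_eq_true this
    exact ⟨Or.inl ⟨_, hmem, rfl⟩, P.lexle_pp P.q_mem hmem hle⟩
  · have hmem := P.iterMinus_mem k hx
    rw [shift_tauMinus]
    have hlt : q < (Tminus g0 g1 q)^[k] x := by
      have : decide (q < (Tminus g0 g1 q)^[k] x) = true := hk
      exact of_decide_eq_true this
    exact ⟨Or.inr ⟨_, hmem, rfl⟩, P.lexle_pm P.q_mem hmem hlt⟩

/-- key estimate: the shifted tails dominate the critical itineraries -/
lemma e_ge_d {a : ℝ} (ha0 : 0 < a) (ha1 : a < 1) (hS : Sprop g0 g1 q a)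
    {σ ω : ℕ → Bool} (hσ : Omem g0 g1 q σ) (hω : Omem g0 g1 q ω) (k : ℕ)
    (hσk : σ k = false) (hωk : ω k = true) :
    piU a (tauPlus g0 g1 q q) - piU a (tauMinus g0 g1 q q) ≤
      piU a (shiftn k ω) - piU a (shiftn k σ) := by
  obtain ⟨hm1, hl1⟩ := P.shift_le_alpha hσ k hσk
  obtain ⟨hm2, hl2⟩ := P.beta_le_shift hω k hωk
  have i1 := hS _ hm1 _ P.alpha_mem hl1
  have i2 := hS _ P.beta_mem _ hm2 hl2
  linarith

end IFSPack

/-- strict monotonicity for small parameters, for arbitrary sequences -/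
lemma strict_small {a : ℝ} (ha0 : 0 < a) (ha2 : a < 1/2) {σ ω : ℕ → Bool}
    (h : lexLt σ ω) : piU a σ < piU a ω := by
  have ha1 : a < 1 := by linarith
  obtain ⟨k, hag, hk⟩ := h
  rw [Bool.lt_iff] at hk
  obtain ⟨hkσ, hkω⟩ := hk
  have hΔ := piU_agree ha0.le ha1 k hag
  have h1 : 1 - a ≤ piU a (shiftn k ω) := by
    have h0 : (1:ℝ) = cond (shiftn k ω 0) (a ^ 0) 0 := by
      show (1:ℝ) = cond (ω (0 + k)) (a ^ 0) 0
      rw [Nat.zero_add, hkω]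
      simp
    have := Summable.le_tsum (summable_cond ha0.le ha1 (shiftn k ω)) 0
      (fun j _ => by cases h : shiftn k ω j <;> simp [h, pow_nonneg ha0.le])
    rw [← h0] at this
    show 1 - a ≤ (1 - a) * ∑' j : ℕ, cond (shiftn k ω j) (a ^ j) 0
    calc 1 - a = (1 - a) * 1 := by ring
      _ ≤ (1 - a) * ∑' j : ℕ, cond (shiftn k ω j) (a ^ j) 0 :=
        mul_le_mul_of_nonneg_left this (by linarith)

  have h2 : piU a (shiftn k σ) ≤ a := by
    set ξ := shiftn k σ with hξ
    have hξ0 : ξ 0 = false := by show σ (0 + k) = false; rw [Nat.zero_add]; exact hkσ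
    have hsum : Summable (fun j => cond (ξ j) (a ^ j) 0) := summable_cond ha0.le ha1 ξ
    have hsplit : (∑ j ∈ Finset.range 1, cond (ξ j) (a ^ j) 0)
        + ∑' j : ℕ, cond (ξ (j + 1)) (a ^ (j + 1)) 0 = ∑' j : ℕ, cond (ξ j) (a ^ j) 0 :=
      Summable.sum_add_tsum_nat_add 1 hsum
    have hz : (∑ j ∈ Finset.range 1, cond (ξ j) (a ^ j) 0) = 0 := by
      rw [Finset.sum_range_one, hξ0]
      rfl
    have hgs : Summable (fun j : ℕ => a ^ (j + 1)) := by
      simpa [pow_succ] using (summable_geometric_of_lt_one ha0.le ha1).mul_right a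
    have hle : ∑' j : ℕ, cond (ξ (j + 1)) (a ^ (j + 1)) 0 ≤ ∑' j : ℕ, a ^ (j + 1) := by
      refine Summable.tsum_le_tsum (fun j => ?_) ((summable_nat_add_iff 1).mpr hsum) hgs
      cases h : ξ (j + 1) <;> simp [h, pow_nonneg ha0.le]
    have hval : ∑' j : ℕ, a ^ (j + 1) = (1 - a)⁻¹ * a := by
      simp only [pow_succ]
      rw [tsum_mul_right, tsum_geometric_of_lt_one ha0.le ha1]
    have htot : ∑' j : ℕ, cond (ξ j) (a ^ j) 0 ≤ (1 - a)⁻¹ * a := by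
      rw [← hsplit, hz, zero_add]
      rw [hval] at hle
      exact hle
    show (1 - a) * ∑' j : ℕ, cond (ξ j) (a ^ j) 0 ≤ a
    calc (1 - a) * ∑' j : ℕ, cond (ξ j) (a ^ j) 0 ≤ (1 - a) * ((1 - a)⁻¹ * a) :=
        mul_le_mul_of_nonneg_left htot (by linarith)
      _ = a := by
        rw [← mul_assoc, mul_inv_cancel₀ (by linarith : (1:ℝ) - a ≠ 0), one_mul]
  have hpow : (0:ℝ) < a ^ k := pow_pos ha0 k
  have he : 0 < piU a (shiftn k ω) - piU a (shiftn k σ) := by linarith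
  have := mul_pos hpow he
  linarith

lemma S_small {g0 g1 : ℝ → ℝ} {q a : ℝ} (ha0 : 0 < a) (ha2 : a < 1/2) :
    Sprop g0 g1 q a := by
  intro σ _ ω _ hlex
  rcases hlex with hlt | rfl
  · exact (strict_small ha0 ha2 hlt).le
  · exact le_refl _

namespace IFSPack

variable {f0 f1 g0 g1 : ℝ → ℝ} {q : ℝ} (P : IFSPack f0 f1 g0 g1 q)

include P

lemma d_pos {a : ℝ} (ha0 : 0 < a) (ha1 : a < 1) (hS : Sprop g0 g1 q a)
    (hd : piU a (tauMinus g0 g1 q q) ≠ piU a (tauPlus g0 g1 q q)) :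
    0 < piU a (tauPlus g0 g1 q q) - piU a (tauMinus g0 g1 q q) := by
  have h := hS _ P.alpha_mem _ P.beta_mem (Or.inl lexLt_alpha_beta)
  cases lt_or_eq_of_le h with
  | inl h' => linarith
  | inr h' => exact absurd h' hd

lemma S_open {a : ℝ} (ha0 : 0 < a) (ha1 : a < 1) (hS : Sprop g0 g1 q a)
    (hd : piU a (tauMinus g0 g1 q q) ≠ piU a (tauPlus g0 g1 q q)) :
    ∃ δ > 0, ∀ b, a - δ ≤ b → b ≤ a + δ → Sprop g0 g1 q b := by
  set d := piU a (tauPlus g0 g1 q q) - piU a (tauMinus g0 g1 q q) with hdd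
  have hd0 : 0 < d := P.d_pos ha0 ha1 hS hd
  set r : ℝ := (1 + a) / 2 with hrdef
  have har : a ≤ r := by rw [hrdef]; linarith
  have hr1 : r < 1 := by rw [hrdef]; linarith
  have h1r : 0 < 1 - r := by linarith
  refine ⟨min (min (a/2) ((1-a)/4)) (d * (1 - r) / 4),
    lt_min (lt_min (by linarith) (by linarith)) (by nlinarith [mul_pos hd0 h1r]), ?_⟩
  intro b hb1 hb2
  set δ := min (min (a/2) ((1-a)/4)) (d * (1 - r) / 4) with hδdef
  have hδ1 : δ ≤ a/2 := le_trans (min_le_left _ _) (min_le_left _ _)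
  have hδ2 : δ ≤ (1-a)/4 := le_trans (min_le_left _ _) (min_le_right _ _)
  have hδ3 : δ ≤ d * (1 - r) / 4 := min_le_right _ _
  have hb0 : 0 < b := by linarith
  have hbr : b ≤ r := by rw [hrdef]; linarith
  have hb1' : b < 1 := lt_of_le_of_lt hbr hr1
  intro σ hσ ω hω hlex
  rcases hlex with hlt | rfl
  swap
  · exact le_refl _
  obtain ⟨k, hag, hk⟩ := hlt
  rw [Bool.lt_iff] at hk
  obtain ⟨hkσ, hkω⟩ := hk
  have hΔ := piU_agree hb0.le hb1' k hag
  have hea := P.e_ge_d ha0 ha1 hS hσ hω k hkσ hkω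
  have habs : |b - a| ≤ δ := abs_le.mpr ⟨by linarith, by linarith⟩
  have lip1 : |piU b (shiftn k ω) - piU a (shiftn k ω)| ≤ |b - a| / (1 - r) :=
    piU_lip ha0 hb0 har hbr hr1 _
  have lip2 : |piU b (shiftn k σ) - piU a (shiftn k σ)| ≤ |b - a| / (1 - r) :=
    piU_lip ha0 hb0 har hbr hr1 _
  have hbd : |b - a| / (1 - r) ≤ d / 4 := by
    rw [div_le_iff₀ h1r]
    calc |b - a| ≤ δ := habs
      _ ≤ d * (1 - r) / 4 := hδ3
      _ = d / 4 * (1 - r) := by ring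
  have l1 := abs_le.mp lip1
  have l2 := abs_le.mp lip2
  have heb : 0 < piU b (shiftn k ω) - piU b (shiftn k σ) := by
    have : d / 4 > 0 := by linarith
    linarith [l1.1, l1.2, l2.1, l2.2, hbd]
  have hpow : (0:ℝ) < b ^ k := pow_pos hb0 k
  nlinarith [mul_pos hpow heb]

lemma S_all (hne : ∀ a : ℝ, 0 < a → a < 1 →
      piU a (tauMinus g0 g1 q q) ≠ piU a (tauPlus g0 g1 q q)) :
    ∀ a : ℝ, 0 < a → a < 1 → Sprop g0 g1 q a := by
  intro a ha0 ha1
  classical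
  set A : Set ℝ := {b : ℝ | 0 < b ∧ b ≤ a ∧ ∀ c, 0 < c → c ≤ b → Sprop g0 g1 q c} with hA
  have hb₀pos : 0 < min a (1/4 : ℝ) := lt_min ha0 (by norm_num)
  have hb₀A : min a (1/4 : ℝ) ∈ A := by
    refine ⟨hb₀pos, min_le_left _ _, fun c hc hcb => ?_⟩
    have : c < 1/2 := by
      have := hcb.trans (min_le_right _ _)
      linarith
    exact S_small hc this
  have hbdd : BddAbove A := ⟨a, fun b hb => hb.2.1⟩
  have hAne : A.Nonempty := ⟨_, hb₀A⟩
  set t := sSup A with ht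
  have ht0 : 0 < t := lt_of_lt_of_le hb₀pos (le_csSup hbdd hb₀A)
  have hta : t ≤ a := csSup_le hAne (fun b hb => hb.2.1)
  have ht1 : t < 1 := lt_of_le_of_lt hta ha1
  have hltS : ∀ c, 0 < c → c < t → Sprop g0 g1 q c := by
    intro c hc hct
    obtain ⟨b, hbA, hcb⟩ := exists_lt_of_lt_csSup hAne hct
    exact hbA.2.2 c hc hcb.le
  -- closedness
  have hSclosed : ∀ s : ℝ, 0 < s → s < 1 →
      (∀ ε : ℝ, 0 < ε → ∃ b, 0 < b ∧ b ≤ s ∧ s - b ≤ ε ∧ Sprop g0 g1 q b) →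
      Sprop g0 g1 q s := by
    intro s hs0 hs1 happ
    intro σ hσ ω hω hlex
    refine le_of_forall_pos_le_add ?_
    intro ε hε
    have hs1' : 0 < 1 - s := by linarith
    obtain ⟨b, hb0, hbs, hbe, hSb⟩ := happ (ε * (1 - s) / 2) (by positivity)
    have lipσ := piU_lip hb0 hs0 hbs (le_refl s) hs1 σ
    have lipω := piU_lip hb0 hs0 hbs (le_refl s) hs1 ω
    rw [abs_of_nonneg (sub_nonneg.mpr hbs)] at lipσ lipω
    have hbS := hSb σ hσ ω hω hlex
    have h2 : (s - b) / (1 - s) ≤ ε / 2 := by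
      rw [div_le_iff₀ hs1']
      calc s - b ≤ ε * (1 - s) / 2 := hbe
        _ = ε / 2 * (1 - s) := by ring
    have l1 := abs_le.mp lipσ
    have l2 := abs_le.mp lipω
    linarith [l1.1, l1.2, l2.1, l2.2]
  have hSt : Sprop g0 g1 q t := by
    refine hSclosed t ht0 ht1 (fun ε hε => ?_)
    refine ⟨max (t/2) (t - ε), lt_of_lt_of_le (by linarith) (le_max_left _ _), ?_, ?_, ?_⟩
    · exact max_le (by linarith) (by linarith)
    · have := le_max_right (t/2) (t - ε)
      linarith
    · refine hltS _ (lt_of_lt_of_le (by linarith) (le_max_left _ _)) ?_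
      exact max_lt (by linarith) (by linarith)
  have hteq : t = a := by
    by_contra hne'
    have htlt : t < a := lt_of_le_of_ne hta hne'
    obtain ⟨δ, hδ0, hSδ⟩ := P.S_open ht0 ht1 hSt (hne t ht0 ht1)
    have hb₁A : min a (t + δ) ∈ A := by
      refine ⟨lt_min ha0 (by linarith), min_le_left _ _, fun c hc hcb => ?_⟩
      rcases lt_trichotomy c t with h | h | h
      · exact hltS c hc h
      · rw [h]; exact hSt
      · refine hSδ c (by linarith) ?_
        exact (hcb.trans (min_le_right _ _))
    have := le_csSup hbdd hb₁A
    have : t < min a (t + δ) := lt_min htlt (by linarith)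
    linarith [le_csSup hbdd hb₁A]
  rw [← hteq]
  exact hSt

end IFSPack

/-- If `π_a(α) ≠ π_a(β)` for every `a ∈ (0,1)`, then `π_a` is strictly increasing on
`Ω̄_q` for every `a ∈ (0,1)`. -/
theorem stmt14
    (f0 f1 g0 g1 : ℝ → ℝ) (q : ℝ)
    (hf0m : StrictMonoOn f0 (Icc 0 1)) (hf1m : StrictMonoOn f1 (Icc 0 1))
    (hf0c : ContinuousOn f0 (Icc 0 1)) (hf1c : ContinuousOn f1 (Icc 0 1))
    (hf0map : MapsTo f0 (Icc 0 1) (Icc 0 1)) (hf1map : MapsTo f1 (Icc 0 1) (Icc 0 1))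
    (hf0lip : ∃ c, 0 ≤ c ∧ c < 1 ∧ ∀ x ∈ Icc (0:ℝ) 1, ∀ y ∈ Icc (0:ℝ) 1, |f0 x - f0 y| ≤ c * |x - y|)
    (hf1lip : ∃ c, 0 ≤ c ∧ c < 1 ∧ ∀ x ∈ Icc (0:ℝ) 1, ∀ y ∈ Icc (0:ℝ) 1, |f1 x - f1 y| ≤ c * |x - y|)
    (hf00 : f0 0 = 0) (hf11 : f1 1 = 1)
    (hf10pos : 0 < f1 0) (hoverf0f1 : f1 0 < f0 1) (hf01lt : f0 1 < 1)
    (hq : q ∈ Ioo (f1 0) (f0 1))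
    (hg0 : ∀ x ∈ Icc (0:ℝ) 1, g0 (f0 x) = x) (hg1 : ∀ x ∈ Icc (0:ℝ) 1, g1 (f1 x) = x)
    (hne : ∀ a : ℝ, 0 < a → a < 1 →
      piU a (tauMinus g0 g1 q q) ≠ piU a (tauPlus g0 g1 q q)) :
    ∀ a : ℝ, 0 < a → a < 1 →
      ∀ σ ∈ tauPlus g0 g1 q '' (Icc 0 1) ∪ tauMinus g0 g1 q '' (Icc 0 1),
      ∀ ω ∈ tauPlus g0 g1 q '' (Icc 0 1) ∪ tauMinus g0 g1 q '' (Icc 0 1),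
        lexLt σ ω → piU a σ < piU a ω := by
  have P : IFSPack f0 f1 g0 g1 q :=
    ⟨hf0m, hf1m, hf0c, hf1c, hf00, hf11, hf10pos, hq.1, hq.2, hf01lt, hg0, hg1⟩
  intro a ha0 ha1 σ hσ ω hω hlt
  have hS := P.S_all hne a ha0 ha1
  obtain ⟨k, hag, hk⟩ := hlt
  rw [Bool.lt_iff] at hk
  obtain ⟨hkσ, hkω⟩ := hk
  have hΔ := piU_agree ha0.le ha1 k hag
  have hea := P.e_ge_d ha0 ha1 hS hσ hω k hkσ hkω
  have hd0 := P.d_pos ha0 ha1 hS (hne a ha0 ha1)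
  have hpow : (0:ℝ) < a ^ k := pow_pos ha0 k
  have he : 0 < piU a (shiftn k ω) - piU a (shiftn k σ) := by linarith
  nlinarith [mul_pos hpow he]
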